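/- In the subsonic region, the Bernoulli equation (γA(S̃₀^e)/(γ−1))(ρ̃^e)^{γ+1} − B̃₀^e(ρ̃^e)² + ((∂ξφ)²+1)/(2(∂ηφ)²) = 0 admits a unique solution ρ̃^e = ρ̃^e(Dφ; B̃₀^e, S̃₀^e), continuously differentiable in Dφ=(∂ξφ,∂ηφ). Moreover its partial derivatives are ∂ρ̃^e/∂(∂ξφ) = −∂ξφ / [ρ̃^e (∂ηφ)² ((c̃^e)² − (1+(∂ξφ)²)/((ρ̃^e)²(∂ηφ)²))] and ∂ρ̃^e/∂(∂ηφ) = ((∂ξφ)²+1) / [ρ̃^e (∂ηφ)³ ((c̃^e)² − (1+(∂ξφ)²)/((ρ̃^e)²(∂ηφ)²))], where c̃^e = √(γA(S̃₀^e)(ρ̃^e)^{γ−1}). -/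

import Mathlib

noncomputable section

open Real Set Metric MeasureTheory Filter

abbrev Pt := ℝ × ℝ

def hNorm {E : Type*} [NormedAddCommGroup E] [NormedSpace ℝ E]
    (m : ℕ) (α : ℝ) (Ω : Set Pt) (f : Pt → E) : ℝ :=
  (∑ j ∈ Finset.range (m + 1),
    sSup ((fun x => ‖iteratedFDeriv ℝ j f x‖) '' Ω)) +
  sSup ((fun q : Pt × Pt =>
    ‖iteratedFDeriv ℝ m f q.1 - iteratedFDeriv ℝ m f q.2‖ / dist q.1 q.2 ^ α) '' (Ω ×ˢ Ω))

def whNorm {E : Type*} [NormedAddCommGroup E] [NormedSpace ℝ E]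
    (m : ℕ) (α k : ℝ) (Sg Ω : Set Pt) (f : Pt → E) : ℝ :=
  (∑ j ∈ Finset.range (m + 1),
    sSup ((fun x => infDist x Sg ^ max ((j : ℝ) + k) 0 * ‖iteratedFDeriv ℝ j f x‖) '' Ω)) +
  sSup ((fun q : Pt × Pt =>
    min (infDist q.1 Sg) (infDist q.2 Sg) ^ max ((m : ℝ) + α + k) 0 *
      ‖iteratedFDeriv ℝ m f q.1 - iteratedFDeriv ℝ m f q.2‖ / dist q.1 q.2 ^ α) '' (Ω ×ˢ Ω))

def hNorm1 {E : Type*} [NormedAddCommGroup E] [NormedSpace ℝ E]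
    (m : ℕ) (α : ℝ) (s : Set ℝ) (f : ℝ → E) : ℝ :=
  (∑ j ∈ Finset.range (m + 1),
    sSup ((fun x => ‖iteratedDeriv j f x‖) '' s)) +
  sSup ((fun q : ℝ × ℝ =>
    ‖iteratedDeriv m f q.1 - iteratedDeriv m f q.2‖ / |q.1 - q.2| ^ α) '' (s ×ˢ s))

def whNorm1 {E : Type*} [NormedAddCommGroup E] [NormedSpace ℝ E]
    (m : ℕ) (α k : ℝ) (Sg s : Set ℝ) (f : ℝ → E) : ℝ :=
  (∑ j ∈ Finset.range (m + 1),
    sSup ((fun x => infDist x Sg ^ max ((j : ℝ) + k) 0 * ‖iteratedDeriv j f x‖) '' s)) +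
  sSup ((fun q : ℝ × ℝ =>
    min (infDist q.1 Sg) (infDist q.2 Sg) ^ max ((m : ℝ) + α + k) 0 *
      ‖iteratedDeriv m f q.1 - iteratedDeriv m f q.2‖ / |q.1 - q.2| ^ α) '' (s ×ˢ s))

def pd1 (f : Pt → ℝ) (x : Pt) : ℝ := fderiv ℝ f x (1, 0)
def pd2 (f : Pt → ℝ) (x : Pt) : ℝ := fderiv ℝ f x (0, 1)

def Afun (κ cν S : ℝ) : ℝ := κ * Real.exp (S / cν)

def Theta (γ κ cν pb B S p : ℝ) : ℝ :=
  ∫ τ in pb..p,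
    Real.sqrt ((γ - 1) * Afun κ cν S ^ (1 / γ) *
        (2 * (γ - 1) * B - γ * (γ + 1) * Afun κ cν S ^ (1 / γ) * τ ^ ((γ - 1) / γ))) /
      (2 * Real.sqrt γ * ((γ - 1) * B - γ * Afun κ cν S ^ (1 / γ) * τ ^ (1 - 1 / γ)) *
        τ ^ ((γ + 1) / (2 * γ)))


/-- (3.29): the Bernoulli relation determining the subsonic density;
`a = A(S̃₀^e)`, `B = B̃₀^e`, `q = Dφ = (∂_ξφ, ∂_ηφ)`. -/
def bern (γ a B : ℝ) (q : Pt) (ρ : ℝ) : ℝ :=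
  γ * a / (γ - 1) * ρ ^ (γ + 1) - B * ρ ^ 2 + (q.1 ^ 2 + 1) / (2 * q.2 ^ 2)

/-- square of the sonic speed, `c² = γ A(S) ρ^{γ−1}`. -/
def sonic2 (γ a ρ : ℝ) : ℝ := γ * a * ρ ^ (γ - 1)

/-- the subsonic margin `c² − (1+(∂_ξφ)²)/(ρ²(∂_ηφ)²) = c² − (ũ² + ṽ²)`. -/
def subMargin (γ a : ℝ) (q : Pt) (ρ : ℝ) : ℝ :=
  sonic2 γ a ρ - (1 + q.1 ^ 2) / (ρ ^ 2 * q.2 ^ 2)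


/-!
For fixed `Dφ = q`, the `ρ`-derivative of `bern γ a B q` is `ρ · bernSlope ρ`, where
`bernSlope ρ = γA(γ+1)/(γ-1) ρ^{γ-1} - 2B` is increasing in `ρ`, and at a root of the Bernoulli
equation `bernSlope` equals the subsonic margin `c² - (ũ² + ṽ²)`. Two subsonic roots therefore both
lie in a half-line on which `bern γ a B q` is strictly increasing, so they coincide. At a subsonic
root the `ρ`-derivative is nonzero, so the implicit function theorem yields a `C¹` branch with
derivative `-∂_q bern / ∂_ρ bern`, and the branch stays subsonic nearby by continuity.
-/

open scoped Topology

theorem ContDiffAt.exists_implicitFunction_of_hasFDerivAt {E : Type*} [NormedAddCommGroup E]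
    [NormedSpace ℝ E] [CompleteSpace E] {f : E × ℝ → ℝ} {u : E × ℝ} {n : WithTop ℕ∞}
    {L : E × ℝ →L[ℝ] ℝ} (hf : ContDiffAt ℝ n f u) (hn : n ≠ 0) (hL : HasFDerivAt f L u)
    (hL₂ : L (0, 1) ≠ 0) :
    ∃ ψ : E → ℝ, ψ u.1 = u.2 ∧ (∀ᶠ x in 𝓝 u.1, f (x, ψ x) = f u) ∧ ContDiffAt ℝ n ψ u.1 ∧
      ∀ v, fderiv ℝ ψ u.1 v = -(L (v, 0) / L (0, 1)) := by
  have hright : (L ∘L .inr ℝ E ℝ) ∘L ((L (0, 1))⁻¹ • .id ℝ ℝ) = .id ℝ ℝ := by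
    ext; simp [hL₂]
  have hleft : ((L (0, 1))⁻¹ • .id ℝ ℝ) ∘L (L ∘L .inr ℝ E ℝ) = .id ℝ ℝ := by
    ext; simp [hL₂]
  have hinv : (fderiv ℝ f u ∘L .inr ℝ E ℝ).IsInvertible :=
    hL.fderiv ▸ .of_inverse hright hleft
  refine ⟨hf.implicitFunction hn hinv, hf.implicitFunction_apply_self hn hinv,
    hf.eventually_apply_implicitFunction hn hinv, hf.contDiffAt_implicitFunction hn hinv,
    fun v => ?_⟩
  rw [(hf.hasStrictFDerivAt_implicitFunction hn hinv).hasFDerivAt.fderiv, hL.fderiv,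
    ContinuousLinearMap.inverse_eq hright hleft]
  simp [div_eq_inv_mul]

def bernSlope (γ a B ρ : ℝ) : ℝ := γ * a * (γ + 1) / (γ - 1) * ρ ^ (γ - 1) - 2 * B

section Bernoulli

variable {γ a B : ℝ}

theorem hasDerivAt_bern (q : Pt) {ρ : ℝ} (hρ : 0 < ρ) :
    HasDerivAt (bern γ a B q) (ρ * bernSlope γ a B ρ) ρ := by
  refine ((((Real.hasDerivAt_rpow_const (p := γ + 1) (Or.inl hρ.ne')).const_mul
    (γ * a / (γ - 1))).sub ((hasDerivAt_pow 2 ρ).const_mul B)).add_const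
    ((q.1 ^ 2 + 1) / (2 * q.2 ^ 2))).congr_deriv ?_
  have : ρ ^ (γ + 1 - 1) = ρ * ρ ^ (γ - 1) := by
    rw [show γ + 1 - 1 = (γ - 1) + 1 by ring, Real.rpow_add_one hρ.ne', mul_comm]
  rw [this, bernSlope]
  push_cast
  ring

theorem bernSlope_eq_subMargin (hγ : γ ≠ 1) {q : Pt} (hq : q.2 ≠ 0) {ρ : ℝ} (hρ : 0 < ρ)
    (h : bern γ a B q ρ = 0) : bernSlope γ a B ρ = subMargin γ a q ρ := by
  have hpow : ρ ^ (γ + 1) = ρ ^ (γ - 1) * ρ ^ 2 := by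
    rw [← Real.rpow_natCast, ← Real.rpow_add hρ]; congr 1; ring
  have hγ' : γ - 1 ≠ 0 := sub_ne_zero.mpr hγ
  rw [bern, hpow] at h
  rw [bernSlope, subMargin, sonic2]
  field_simp at h ⊢
  linear_combination h

theorem monotoneOn_bernSlope (hγ : 1 < γ) (ha : 0 ≤ a) :
    MonotoneOn (bernSlope γ a B) (Ici 0) := by
  intro x hx y _ hxy
  have : 0 ≤ γ * a * (γ + 1) / (γ - 1) := by
    have := sub_pos.mpr hγ
    positivity
  unfold bernSlope
  gcongr

theorem continuousAt_bernSlope {ρ : ℝ} (hρ : ρ ≠ 0) : ContinuousAt (bernSlope γ a B) ρ := by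
  have := Real.continuousAt_rpow_const ρ (γ - 1) (Or.inl hρ)
  unfold bernSlope
  fun_prop

theorem strictMonoOn_bern (hγ : 1 < γ) (ha : 0 ≤ a) (q : Pt) {m : ℝ} (hm : 0 < m)
    (hslope : 0 < bernSlope γ a B m) : StrictMonoOn (bern γ a B q) (Ici m) := by
  refine strictMonoOn_of_hasDerivWithinAt_pos (convex_Ici m)
    (fun x hx => (hasDerivAt_bern q (hm.trans_le hx)).continuousAt.continuousWithinAt)
    (fun x hx => (hasDerivAt_bern q (hm.trans_le (interior_subset hx))).hasDerivWithinAt)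
    fun x hx => ?_
  rw [interior_Ici] at hx
  have hx0 : 0 < x := hm.trans hx
  exact mul_pos hx0 (hslope.trans_le (monotoneOn_bernSlope hγ ha hm.le hx0.le hx.le))

theorem eq_of_bern_eq_zero_of_subMargin_pos (hγ : 1 < γ) (ha : 0 ≤ a) {q : Pt} (hq : q.2 ≠ 0)
    {r s : ℝ} (hr : 0 < r) (hs : 0 < s) (hbr : bern γ a B q r = 0) (hbs : bern γ a B q s = 0)
    (hmr : 0 < subMargin γ a q r) (hms : 0 < subMargin γ a q s) : r = s := by
  rw [← bernSlope_eq_subMargin hγ.ne' hq hr hbr] at hmr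
  rw [← bernSlope_eq_subMargin hγ.ne' hq hs hbs] at hms
  have hmin : 0 < bernSlope γ a B (min r s) := by
    rcases min_choice r s with h | h <;> rw [h] <;> assumption
  exact (strictMonoOn_bern hγ ha q (lt_min hr hs) hmin).injOn (min_le_left r s)
    (min_le_right r s) (hbr.trans hbs.symm)

theorem hasFDerivAt_uncurry_bern {q : Pt} (hq : q.2 ≠ 0) {ρ : ℝ} (hρ : 0 < ρ) :
    HasFDerivAt (fun v : Pt × ℝ => bern γ a B v.1 v.2)
      (((q.1 / q.2 ^ 2) • ContinuousLinearMap.fst ℝ ℝ ℝ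
          - ((q.1 ^ 2 + 1) / q.2 ^ 3) • ContinuousLinearMap.snd ℝ ℝ ℝ) ∘L
        ContinuousLinearMap.fst ℝ Pt ℝ
        + (ρ * bernSlope γ a B ρ) • ContinuousLinearMap.snd ℝ Pt ℝ) (q, ρ) := by
  have hpot := (hasDerivAt_bern (γ := γ) (a := a) (B := B) q hρ).comp_hasFDerivAt (q, ρ)
    (hasFDerivAt_snd (𝕜 := ℝ))
  have hnum : HasFDerivAt (fun v : Pt × ℝ => v.1.1 ^ 2 + 1) _ (q, ρ) :=
    ((hasFDerivAt_fst (𝕜 := ℝ)).fst.pow 2).add_const 1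
  have hden : HasFDerivAt (fun v : Pt × ℝ => (2 * v.1.2 ^ 2)⁻¹) _ (q, ρ) :=
    (hasDerivAt_inv (by positivity)).comp_hasFDerivAt (q, ρ)
      (((hasFDerivAt_fst (𝕜 := ℝ)).snd.pow 2).const_mul 2)
  -- `bern v.1 v.2 = bern q v.2 + (K v.1 - K q)` with `K p = (p.1 ^ 2 + 1) / (2 * p.2 ^ 2)`
  have hkin := (hnum.mul hden).sub_const ((q.1 ^ 2 + 1) / (2 * q.2 ^ 2))
  refine ((hpot.add hkin).congr_fderiv ?_).congr_of_eventuallyEq (.of_forall fun v => ?_)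
  · ext <;> simp <;> field_simp
  · simp only [bern, Function.comp, Pi.add_apply, Pi.mul_apply]
    ring

theorem contDiffAt_uncurry_bern {n : WithTop ℕ∞} {q : Pt} (hq : q.2 ≠ 0) {ρ : ℝ} (hρ : 0 < ρ) :
    ContDiffAt ℝ n (fun v : Pt × ℝ => bern γ a B v.1 v.2) (q, ρ) := by
  unfold bern
  have := Real.contDiffAt_rpow_const_of_ne (n := n) (p := γ + 1) hρ.ne'
  fun_prop (disch := simp [hq])

end Bernoulli

theorem statement_5_general (γ a B : ℝ) (hγ : 1 < γ) (ha : 0 < a)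
    (q0 : Pt) (hq2 : 0 < q0.2) (ρ0 : ℝ) (hρ0 : 0 < ρ0)
    (heq : bern γ a B q0 ρ0 = 0) (hsub : 0 < subMargin γ a q0 ρ0) :
    -- uniqueness of the density within the subsonic branch
    (∀ r : ℝ, 0 < r → bern γ a B q0 r = 0 → 0 < subMargin γ a q0 r → r = ρ0) ∧
    -- a continuously differentiable solution map `Dφ ↦ ρ̃^e(Dφ; B̃₀^e, S̃₀^e)`
    -- with the partial derivatives (3.30)
    ∃ ρe : Pt → ℝ, ρe q0 = ρ0 ∧
      (∀ᶠ q in nhds q0, 0 < ρe q ∧ bern γ a B q (ρe q) = 0 ∧ 0 < subMargin γ a q (ρe q)) ∧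
      ContDiffAt ℝ 1 ρe q0 ∧
      fderiv ℝ ρe q0 (1, 0) = -(q0.1 / (ρ0 * q0.2 ^ 2 * subMargin γ a q0 ρ0)) ∧
      fderiv ℝ ρe q0 (0, 1) = (q0.1 ^ 2 + 1) / (ρ0 * q0.2 ^ 3 * subMargin γ a q0 ρ0) := by
  refine ⟨fun r hr hbr hmr =>
    eq_of_bern_eq_zero_of_subMargin_pos hγ ha.le hq2.ne' hr hρ0 hbr heq hmr hsub, ?_⟩
  have hslope : bernSlope γ a B ρ0 = subMargin γ a q0 ρ0 :=
    bernSlope_eq_subMargin hγ.ne' hq2.ne' hρ0 heq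
  obtain ⟨ρe, hρe0, hroot, hcd, hderiv⟩ :=
    (contDiffAt_uncurry_bern (γ := γ) (a := a) (B := B) (n := 1) hq2.ne' hρ0)
      |>.exists_implicitFunction_of_hasFDerivAt one_ne_zero (hasFDerivAt_uncurry_bern hq2.ne' hρ0)
        (by simp [hslope]; exact ⟨hρ0.ne', hsub.ne'⟩)
  dsimp only at hρe0 hroot hcd hderiv
  have hρe : Tendsto ρe (𝓝 q0) (𝓝 ρ0) := hρe0 ▸ hcd.continuousAt.tendsto
  refine ⟨ρe, hρe0, ?_, hcd, ?_, ?_⟩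
  · filter_upwards [hroot, hρe.eventually_const_lt hρ0,
      ((continuousAt_bernSlope hρ0.ne').tendsto.comp hρe).eventually_const_lt (hslope ▸ hsub),
      continuous_snd.continuousAt.eventually_ne hq2.ne'] with q hbq hpos hslope_pos hq
    rw [heq] at hbq
    exact ⟨hpos, hbq, bernSlope_eq_subMargin hγ.ne' hq hpos hbq ▸ hslope_pos⟩
  all_goals
    rw [hderiv]
    simp [hslope]
    field_simp

theorem statement_5 (γ a B : ℝ) (hγ : 1 < γ) (ha : 0 < a) (hB : 0 < B)
    (q0 : Pt) (hq2 : 0 < q0.2) (ρ0 : ℝ) (hρ0 : 0 < ρ0)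
    (heq : bern γ a B q0 ρ0 = 0) (hsub : 0 < subMargin γ a q0 ρ0) :
    -- uniqueness of the density within the subsonic branch
    (∀ r : ℝ, 0 < r → bern γ a B q0 r = 0 → 0 < subMargin γ a q0 r → r = ρ0) ∧
    -- a continuously differentiable solution map `Dφ ↦ ρ̃^e(Dφ; B̃₀^e, S̃₀^e)`
    -- with the partial derivatives (3.30)
    ∃ ρe : Pt → ℝ, ρe q0 = ρ0 ∧
      (∀ᶠ q in nhds q0, 0 < ρe q ∧ bern γ a B q (ρe q) = 0 ∧ 0 < subMargin γ a q (ρe q)) ∧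
      ContDiffAt ℝ 1 ρe q0 ∧
      fderiv ℝ ρe q0 (1, 0) = -(q0.1 / (ρ0 * q0.2 ^ 2 * subMargin γ a q0 ρ0)) ∧
      fderiv ℝ ρe q0 (0, 1) = (q0.1 ^ 2 + 1) / (ρ0 * q0.2 ^ 3 * subMargin γ a q0 ρ0) :=
  statement_5_general γ a B hγ ha q0 hq2 ρ0 hρ0 heq hsub
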